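/- For every bounded linear operator T on a complex Banach space, the pseudo upper semi B-Fredholm spectrum σ_{pBuF}(T) = {λ ∈ ℂ : T - λI is not pseudo upper semi B-Fredholm} is a compact subset of ℂ. -/

import Mathlib

open Function Set

noncomputable section

namespace PseudoBF

variable {E : Type*} [NormedAddCommGroup E] [NormedSpace ℂ E]

/-- `M` is invariant under `T`. -/
def Inv (T : E →L[ℂ] E) (M : Submodule ℂ E) : Prop := ∀ x ∈ M, T x ∈ M

/-- Restriction of `T` to a `T`-invariant submodule, as a continuous linear map. -/
def restr (T : E →L[ℂ] E) {M : Submodule ℂ E} (h : Inv T M) : M →L[ℂ] M where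
  toLinearMap := (T : E →ₗ[ℂ] E).restrict h
  cont := (T.continuous.comp continuous_subtype_val).subtype_mk _

/-- Upper semi-Fredholm: finite dimensional kernel and closed range. -/
def UpperSemiFredholm (T : E →L[ℂ] E) : Prop :=
  FiniteDimensional ℂ (LinearMap.ker (T : E →ₗ[ℂ] E)) ∧ IsClosed (LinearMap.range (T : E →ₗ[ℂ] E) : Set E)

/-- Lower semi-Fredholm: range of finite codimension. -/
def LowerSemiFredholm (T : E →L[ℂ] E) : Prop :=
  FiniteDimensional ℂ (E ⧸ LinearMap.range (T : E →ₗ[ℂ] E))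

/-- Semi-Fredholm: upper or lower semi-Fredholm. -/
def SemiFredholm (T : E →L[ℂ] E) : Prop :=
  UpperSemiFredholm T ∨ LowerSemiFredholm T

/-- Quasi-nilpotent: spectral radius zero. -/
def QuasiNilpotentOp (T : E →L[ℂ] E) : Prop := spectralRadius ℂ T = 0

/-- Bounded below. -/
def BoundedBelow (T : E →L[ℂ] E) : Prop := ∃ c > 0, ∀ x, c * ‖x‖ ≤ ‖T x‖

/-- Left invertible: bounded below with complemented closed range. -/
def LeftInvertibleOp (T : E →L[ℂ] E) : Prop :=
  BoundedBelow T ∧ IsClosed (LinearMap.range (T : E →ₗ[ℂ] E) : Set E) ∧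
    ∃ P : Submodule ℂ E, IsClosed (P : Set E) ∧ IsCompl (LinearMap.range (T : E →ₗ[ℂ] E)) P

/-- Right invertible: surjective with complemented kernel. -/
def RightInvertibleOp (T : E →L[ℂ] E) : Prop :=
  Surjective T ∧ ∃ P : Submodule ℂ E, IsClosed (P : Set E) ∧ IsCompl (LinearMap.ker (T : E →ₗ[ℂ] E)) P

/-- `T` decomposes as a direct sum, along closed invariant subspaces, of an operator
satisfying `P` and a quasi-nilpotent operator. -/
def Decomp (T : E →L[ℂ] E) (P : ∀ M : Submodule ℂ E, (M →L[ℂ] M) → Prop) : Prop :=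
  ∃ (M N : Submodule ℂ E) (hM : Inv T M) (hN : Inv T N),
    IsClosed (M : Set E) ∧ IsClosed (N : Set E) ∧ IsCompl M N ∧
      P M (restr T hM) ∧ QuasiNilpotentOp (restr T hN)

def PseudoUpperSemiBFredholm (T : E →L[ℂ] E) : Prop :=
  Decomp T fun _ S => UpperSemiFredholm S

def PseudoLowerSemiBFredholm (T : E →L[ℂ] E) : Prop :=
  Decomp T fun _ S => LowerSemiFredholm S

def PseudoSemiBFredholm (T : E →L[ℂ] E) : Prop :=
  Decomp T fun _ S => SemiFredholm S

def PseudoBFredholm (T : E →L[ℂ] E) : Prop :=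
  Decomp T fun _ S => UpperSemiFredholm S ∧ LowerSemiFredholm S

def LeftGenDrazinInvertible (T : E →L[ℂ] E) : Prop :=
  Decomp T fun _ S => LeftInvertibleOp S

def RightGenDrazinInvertible (T : E →L[ℂ] E) : Prop :=
  Decomp T fun _ S => RightInvertibleOp S

def GenDrazinInvertible (T : E →L[ℂ] E) : Prop :=
  Decomp T fun _ S => IsUnit S

def sigma_pBuF (T : E →L[ℂ] E) : Set ℂ :=
  {l | ¬ PseudoUpperSemiBFredholm (T - l • 1)}

def sigma_pBlF (T : E →L[ℂ] E) : Set ℂ :=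
  {l | ¬ PseudoLowerSemiBFredholm (T - l • 1)}

def sigma_pBF (T : E →L[ℂ] E) : Set ℂ :=
  {l | ¬ PseudoBFredholm (T - l • 1)}

def sigma_lgD (T : E →L[ℂ] E) : Set ℂ :=
  {l | ¬ LeftGenDrazinInvertible (T - l • 1)}

def sigma_rgD (T : E →L[ℂ] E) : Set ℂ :=
  {l | ¬ RightGenDrazinInvertible (T - l • 1)}

def sigma_gD (T : E →L[ℂ] E) : Set ℂ :=
  {l | ¬ GenDrazinInvertible (T - l • 1)}

/-- The approximate point spectrum. -/
def sigma_ap (T : E →L[ℂ] E) : Set ℂ := {l | ¬ BoundedBelow (T - l • 1)}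

/-- The surjectivity spectrum. -/
def sigma_su (T : E →L[ℂ] E) : Set ℂ := {l | ¬ Surjective ⇑(T - l • 1)}

/-- `T` has the single valued extension property at `l0`. -/
def HasSVEPAt (T : E →L[ℂ] E) (l0 : ℂ) : Prop :=
  ∀ U : Set ℂ, IsOpen U → l0 ∈ U → ∀ f : ℂ → E, AnalyticOnNhd ℂ f U →
    (∀ z ∈ U, T (f z) = z • f z) → ∀ z ∈ U, f z = 0

/-- The set where `T` fails to have the SVEP. -/
def S_ (T : E →L[ℂ] E) : Set ℂ := {l | ¬ HasSVEPAt T l}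

/-- `l` is an accumulation point of `S`. -/
def IsAccPtOf (l : ℂ) (S : Set ℂ) : Prop :=
  ∀ ε > 0, ∃ μ ∈ S, μ ≠ l ∧ ‖μ - l‖ < ε

/-- The Banach-space adjoint of `T`, acting on the dual space. -/
def adj (T : E →L[ℂ] E) : StrongDual ℂ E →L[ℂ] StrongDual ℂ E :=
  (ContinuousLinearMap.compL ℂ E E ℂ).flip T

/-!
Since `σ_pBuF(T)` lies in the compact spectrum `σ(T)`, it suffices to show that it is closed.
Upper semi-Fredholm operators on a Banach space are exactly those that are bounded below on some
closed subspace of finite codimension, and that property survives small perturbations, so they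
form an open set. If `T - λ₀ = A ⊕ Q` with `A` upper semi-Fredholm and `Q` quasi-nilpotent, then
for `λ ≠ λ₀` close to `λ₀` the part `A + (λ₀ - λ)` is still upper semi-Fredholm while
`Q + (λ₀ - λ)` is invertible; hence `T - λ` is itself upper semi-Fredholm, and so pseudo upper
semi B-Fredholm through the trivial splitting `X = X ⊕ 0`.
-/

open scoped Topology

section UpperSemiFredholm

variable [CompleteSpace E]

theorem upperSemiFredholm_of_antilipschitz_comp_subtypeL {U : E →L[ℂ] E} {W : Submodule ℂ E}
    (hW : IsClosed (W : Set E)) [W.CoFG] {K : NNReal}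
    (hU : AntilipschitzWith K (U ∘L W.subtypeL)) : UpperSemiFredholm U := by
  have : CompleteSpace W := hW.completeSpace_coe
  refine ⟨?_, ?_⟩
  · have hdisj : Disjoint W (LinearMap.ker (U : E →ₗ[ℂ] E)) := by
      rw [Submodule.disjoint_def]
      intro x hxW hxU
      have : (⟨x, hxW⟩ : W) = 0 := hU.injective (by simpa using hxU)
      simpa using congrArg Subtype.val this
    exact .of_fg (Submodule.CoFG.fg_of_disjoint hdisj.symm inferInstance)
  · apply LinearMap.isClosed_range_of_isClosed_map_of_finiteDimensional_quotient (s := W)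
    have hmap : (W.map (U : E →ₗ[ℂ] E) : Set E) = Set.range (U ∘L W.subtypeL) := by
      ext; simp
    rw [hmap]
    exact hU.isClosed_range (U ∘L W.subtypeL).uniformContinuous

theorem UpperSemiFredholm.exists_antilipschitz_comp_subtypeL {S : E →L[ℂ] E}
    (hS : UpperSemiFredholm S) : ∃ W : Submodule ℂ E, IsClosed (W : Set E) ∧ W.CoFG ∧
      ∃ K, AntilipschitzWith K (S ∘L W.subtypeL) := by
  obtain ⟨hker, hrange⟩ := hS
  obtain ⟨W, hW, hcompl⟩ :=
    (Submodule.ClosedComplemented.of_finiteDimensional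
      (LinearMap.ker (S : E →ₗ[ℂ] E))).exists_isClosed_isCompl
  have : CompleteSpace W := hW.completeSpace_coe
  refine ⟨W, hW, Submodule.FG.cofg_of_isCompl hcompl (Module.Finite.iff_fg.mp hker), ?_⟩
  refine (S ∘L W.subtypeL).antilipschitz_of_injective_of_isClosed_range ?_ ?_
  · rw [← ContinuousLinearMap.coe_coe, ← LinearMap.ker_eq_bot]
    simpa [LinearMap.ker_comp, Submodule.disjoint_iff_comap_eq_bot] using hcompl.symm.disjoint
  · have : Set.range (S ∘L W.subtypeL) = LinearMap.range (S : E →ₗ[ℂ] E) := by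
      rw [← Submodule.map_eq_range_iff.mpr hcompl.symm.codisjoint]
      ext; simp
    rwa [this]

theorem isOpen_setOf_upperSemiFredholm : IsOpen {S : E →L[ℂ] E | UpperSemiFredholm S} := by
  rw [Metric.isOpen_iff]
  intro S hS
  obtain ⟨W, hW, _, K, hK⟩ := hS.exists_antilipschitz_comp_subtypeL
  -- `K + 1` rather than `K`: in `ℝ≥0`, `0⁻¹ = 0` would give an empty ball.
  have hK' : AntilipschitzWith (K + 1) (S ∘L W.subtypeL) := fun x y =>
    (hK x y).trans (by gcongr; exact_mod_cast le_self_add)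
  refine ⟨(K + 1 : NNReal)⁻¹, by positivity, fun D hD => ?_⟩
  rw [Metric.mem_ball, dist_eq_norm, ← coe_nnnorm, ← NNReal.coe_inv, NNReal.coe_lt_coe] at hD
  have hlip : LipschitzWith ‖D - S‖₊ ((D - S) ∘L W.subtypeL) :=
    ((D - S).lipschitz.comp (LipschitzWith.subtype_val (W : Set E))).weaken (mul_one _).le
  have hDW : AntilipschitzWith ((K + 1)⁻¹ - ‖D - S‖₊)⁻¹ (D ∘L W.subtypeL) := by
    have hsplit :
        ⇑(D ∘L W.subtypeL) = fun x => (S ∘L W.subtypeL) x + ((D - S) ∘L W.subtypeL) x := by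
      funext x; simp
    rw [hsplit]
    exact hK'.add_lipschitzWith hlip hD
  exact upperSemiFredholm_of_antilipschitz_comp_subtypeL hW hDW

end UpperSemiFredholm

@[simp]
theorem restr_apply_coe (T : E →L[ℂ] E) {M : Submodule ℂ E} (hM : Inv T M) (x : M) :
    (restr T hM x : E) = T x :=
  rfl

theorem Inv.sub_smul_one {T : E →L[ℂ] E} {M : Submodule ℂ E} {a : ℂ} (h : Inv (T - a • 1) M)
    (b : ℂ) : Inv (T - b • 1) M := by
  intro x hx
  have hsplit : (T - b • 1) x = (T - a • 1) x + (a - b) • x := by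
    simp only [sub_apply, smul_apply, one_apply_eq_self, sub_smul]
    abel
  rw [hsplit]
  exact M.add_mem (h x hx) (M.smul_mem _ hx)

theorem restr_sub_smul_one {T : E →L[ℂ] E} {M : Submodule ℂ E} {a b : ℂ}
    (ha : Inv (T - a • 1) M) (hb : Inv (T - b • 1) M) :
    restr (T - b • 1) hb = restr (T - a • 1) ha + (a - b) • 1 := by
  ext x
  simp [sub_smul]

def kerRestrEquiv {T : E →L[ℂ] E} {M : Submodule ℂ E} (hM : Inv T M)
    (hker : LinearMap.ker (T : E →ₗ[ℂ] E) ≤ M) :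
    LinearMap.ker (restr T hM : M →ₗ[ℂ] M) ≃ₗ[ℂ] LinearMap.ker (T : E →ₗ[ℂ] E) :=
  (LinearEquiv.ofEq _ _ (LinearMap.ker_restrict hM)).trans (Submodule.comapSubtypeEquivOfLe hker)

theorem upperSemiFredholm_of_bijective {T : E →L[ℂ] E} (hT : Bijective T) :
    UpperSemiFredholm T := by
  refine ⟨?_, ?_⟩
  · rw [LinearMap.ker_eq_bot.mpr hT.1]
    infer_instance
  · rw [LinearMap.range_eq_top.mpr hT.2]
    exact isClosed_univ

theorem UpperSemiFredholm.pseudoUpperSemiBFredholm {T : E →L[ℂ] E} (hT : UpperSemiFredholm T) :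
    PseudoUpperSemiBFredholm T := by
  have hTop : Inv T ⊤ := fun _ _ => Submodule.mem_top
  have hBot : Inv T ⊥ := fun x hx => by simp_all
  refine ⟨⊤, ⊥, hTop, hBot, isClosed_univ, (⊥ : Submodule ℂ E).closed_of_finiteDimensional,
    isCompl_top_bot, ⟨?_, ?_⟩, spectrum.SpectralRadius.of_subsingleton _⟩
  · have := hT.1
    exact (kerRestrEquiv hTop le_top).symm.finiteDimensional
  · have hrange :
        LinearMap.range (restr T hTop : (⊤ : Submodule ℂ E) →ₗ[ℂ] (⊤ : Submodule ℂ E)) =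
          (LinearMap.range (T : E →ₗ[ℂ] E)).comap (⊤ : Submodule ℂ E).subtype := by
      ext y
      simp only [LinearMap.mem_range, Submodule.mem_comap, Submodule.subtype_apply]
      constructor
      · rintro ⟨x, rfl⟩
        exact ⟨x, rfl⟩
      · rintro ⟨x, hx⟩
        exact ⟨⟨x, trivial⟩, Subtype.ext hx⟩
    rw [hrange]
    exact hT.2.preimage continuous_subtype_val

section Decomposition

variable {T : E →L[ℂ] E} {M N : Submodule ℂ E}

theorem projection_apply_comm_of_inv (hM : Inv T M) (hN : Inv T N) (hMN : IsCompl M N) (x : E) :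
    M.projection N hMN (T x) = T (M.projection N hMN x) := by
  conv_lhs => rw [← Submodule.projection_add_projection_eq_self hMN x]
  rw [map_add, map_add,
    Submodule.projection_apply_of_mem_left hMN (hM _ (Submodule.projection_apply_mem _ _)),
    (Submodule.projection_apply_eq_zero_iff hMN).mpr (hN _ (Submodule.projection_apply_mem _ _)),
    add_zero]

theorem ker_le_of_injective_restr (hM : Inv T M) (hN : Inv T N) (hMN : IsCompl M N)
    (hTN : Injective (restr T hN)) : LinearMap.ker (T : E →ₗ[ℂ] E) ≤ M := by
  intro x hx
  rw [← Submodule.projection_apply_eq_zero_iff hMN.symm]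
  have hzero : restr T hN ⟨N.projection M hMN.symm x, Submodule.projection_apply_mem _ _⟩ = 0 := by
    ext
    rw [restr_apply_coe, ← projection_apply_comm_of_inv hN hM hMN.symm, show T x = 0 from hx,
      map_zero]
    rfl
  exact congrArg Subtype.val (hTN (hzero.trans (map_zero _).symm))

theorem range_eq_comap_projectionOnto (hM : Inv T M) (hN : Inv T N) (hMN : IsCompl M N)
    (hTN : Surjective (restr T hN)) :
    LinearMap.range (T : E →ₗ[ℂ] E) =
      (LinearMap.range (restr T hM : M →ₗ[ℂ] M)).comap (M.projectionOnto N hMN) := by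
  ext y
  simp only [Submodule.mem_comap, LinearMap.mem_range]
  constructor
  · rintro ⟨x, rfl⟩
    exact ⟨M.projectionOnto N hMN x, Subtype.ext (by simp [projection_apply_comm_of_inv hM hN hMN])⟩
  · rintro ⟨m, hm⟩
    obtain ⟨n, hn⟩ := hTN ⟨N.projection M hMN.symm y, Submodule.projection_apply_mem _ _⟩
    refine ⟨m + n, ?_⟩
    have hTm : T m = M.projection N hMN y := congrArg Subtype.val hm
    have hTn : T n = N.projection M hMN.symm y := congrArg Subtype.val hn
    simp only [ContinuousLinearMap.coe_coe, map_add, hTm, hTn]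
    exact Submodule.projection_add_projection_eq_self hMN y

theorem upperSemiFredholm_of_isCompl [CompleteSpace E] (hM : Inv T M) (hN : Inv T N)
    (hMc : IsClosed (M : Set E)) (hNc : IsClosed (N : Set E)) (hMN : IsCompl M N)
    (hTM : UpperSemiFredholm (restr T hM)) (hTN : Bijective (restr T hN)) :
    UpperSemiFredholm T := by
  obtain ⟨hker, hrange⟩ := hTM
  refine ⟨(kerRestrEquiv hM (ker_le_of_injective_restr hM hN hMN hTN.1)).finiteDimensional, ?_⟩
  rw [range_eq_comap_projectionOnto hM hN hMN hTN.2]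
  exact hrange.preimage
    (Submodule.IsCompl.isTopCompl_of_isClosed hMN hMc hNc).continuous_projectionOnto

end Decomposition

theorem QuasiNilpotentOp.isUnit_add_smul_one [CompleteSpace E] {Q : E →L[ℂ] E}
    (hQ : QuasiNilpotentOp Q) {z : ℂ} (hz : z ≠ 0) : IsUnit (Q + z • 1) := by
  have hres : -z ∈ resolventSet ℂ Q :=
    spectrum.mem_resolventSet_of_spectralRadius_lt (by rw [hQ]; simpa [pos_iff_ne_zero] using hz)
  simpa [Algebra.algebraMap_eq_smul_one] using (spectrum.mem_resolventSet_iff.mp hres).neg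

theorem sigma_pBuF_subset_spectrum [CompleteSpace E] (T : E →L[ℂ] E) :
    sigma_pBuF T ⊆ spectrum ℂ T := by
  intro l hl
  by_contra hspec
  have hunit : IsUnit (T - l • 1) := by
    simpa [Algebra.algebraMap_eq_smul_one] using (spectrum.notMem_iff.mp hspec).neg
  exact hl (upperSemiFredholm_of_bijective
    (ContinuousLinearMap.isUnit_iff_bijective.mp hunit)).pseudoUpperSemiBFredholm

theorem isClosed_sigma_pBuF [CompleteSpace E] (T : E →L[ℂ] E) : IsClosed (sigma_pBuF T) := by
  rw [← isOpen_compl_iff, isOpen_iff_mem_nhds]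
  intro l₀ hl₀
  obtain ⟨M, N, hM, hN, hMc, hNc, hMN, hTM, hTN⟩ := not_not.mp hl₀
  have : CompleteSpace M := hMc.completeSpace_coe
  have : CompleteSpace N := hNc.completeSpace_coe
  have hnear : ∀ᶠ l in 𝓝 l₀,
      UpperSemiFredholm (restr (T - l₀ • 1) hM + (l₀ - l) • (1 : M →L[ℂ] M)) := by
    have hcont : Continuous fun l : ℂ => restr (T - l₀ • 1) hM + (l₀ - l) • (1 : M →L[ℂ] M) := by
      fun_prop
    refine hcont.continuousAt.preimage_mem_nhds (isOpen_setOf_upperSemiFredholm.mem_nhds ?_)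
    simpa [zero_smul ℂ (1 : M →L[ℂ] M)] using hTM
  filter_upwards [hnear] with l hl
  rcases eq_or_ne l l₀ with rfl | hne
  · exact hl₀
  refine not_not.mpr (upperSemiFredholm_of_isCompl (hM.sub_smul_one l) (hN.sub_smul_one l)
    hMc hNc hMN ?_ ?_).pseudoUpperSemiBFredholm
  · rwa [restr_sub_smul_one hM]
  · rw [restr_sub_smul_one hN, ← ContinuousLinearMap.isUnit_iff_bijective]
    exact hTN.isUnit_add_smul_one (sub_ne_zero.mpr hne.symm)

theorem stmt1 [CompleteSpace E] (T : E →L[ℂ] E) : IsCompact (sigma_pBuF T) :=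
  (spectrum.isCompact T).of_isClosed_subset (isClosed_sigma_pBuF T) (sigma_pBuF_subset_spectrum T)

end PseudoBF
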